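/- Let N ≥ 2 and let p ∈ [1, ∞) with p ≠ 2. Then for every λ > 0 and every locally bounded function H : ℝᴺ∖{0} → ℝ, there exist ν ∈ ℝᴺ∖{0} and X, Y ∈ 𝕊(N) with X ≤ Y such that F_p(ν, X) − F_p(ν, Y) < λ·tr(Y − X) + H(ν). In particular, F_p does not belong to Class U. -/
import Mathlib


open Matrix

/-- The Loewner partial order on matrices: `X ≤ Y` iff `Y - X` is positive semidefinite. -/
def Loewner {n : Type*} [Fintype n] (X Y : Matrix n n ℝ) : Prop := (Y - X).PosSemidef

/-- The eigenvalues of a real symmetric matrix, listed in increasing order. -/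
noncomputable def eigs {N : ℕ} (X : Matrix (Fin N) (Fin N) ℝ) : Fin N → ℝ :=
  if h : X.IsHermitian then h.eigenvalues ∘ Tuple.sort h.eigenvalues else 0

/-- The smallest eigenvalue of a real symmetric matrix. -/
noncomputable def lam1 {N : ℕ} (X : Matrix (Fin N) (Fin N) ℝ) : ℝ := ⨅ i, eigs X i

/-- The largest eigenvalue of a real symmetric matrix. -/
noncomputable def lamN {N : ℕ} (X : Matrix (Fin N) (Fin N) ℝ) : ℝ := ⨆ i, eigs X i

/-- The p-Laplace function
`F_p(ν, X) = −|ν|^{p−2} (tr X + (p−2) ⟨Xν, ν⟩ / |ν|²)`. -/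
noncomputable def Fp {N : ℕ} (p : ℝ) (ν : EuclideanSpace ℝ (Fin N))
    (X : Matrix (Fin N) (Fin N) ℝ) : ℝ :=
  -(‖ν‖ ^ (p - 2)) * (X.trace +
    (p - 2) * (X.mulVec ((WithLp.equiv 2 (Fin N → ℝ)) ν) ⬝ᵥ (WithLp.equiv 2 (Fin N → ℝ)) ν)
      / ‖ν‖ ^ (2 : ℕ))

/-- For `p ≠ 2` the p-Laplace function `F_p` is not of Class U:
no ellipticity constant `λ > 0` and locally bounded `H` verify the Class U inequality. -/
theorem pLaplace_not_classU {N : ℕ} (hN : 2 ≤ N) (p : ℝ) (hp1 : 1 ≤ p) (hp2 : p ≠ 2) :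
    ∀ lam : ℝ, 0 < lam →
    ∀ H : EuclideanSpace ℝ (Fin N) → ℝ,
      (∀ ν : EuclideanSpace ℝ (Fin N), ν ≠ 0 →
        ∃ U ∈ nhds ν, ∃ C : ℝ, ∀ w ∈ U, w ≠ (0 : EuclideanSpace ℝ (Fin N)) → |H w| ≤ C) →
    ∃ ν : EuclideanSpace ℝ (Fin N), ν ≠ 0 ∧
    ∃ X Y : Matrix (Fin N) (Fin N) ℝ, X.IsHermitian ∧ Y.IsHermitian ∧ Loewner X Y ∧
      Fp p ν X - Fp p ν Y < lam * (Y - X).trace + H ν := by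
  intro lam hlam H _hH
  have hp2' : p - 2 ≠ 0 := sub_ne_zero.mpr hp2
  set i0 : Fin N := ⟨0, by omega⟩ with hi0
  set i1 : Fin N := ⟨1, by omega⟩ with hi1
  have hi : i1 ≠ i0 := by simp [hi0, hi1, Fin.ext_iff]
  set s : ℝ := (lam / 2) ^ ((p - 2)⁻¹) with hs_def
  have hs : 0 < s := Real.rpow_pos_of_pos (by linarith) _
  have hsp : s ^ (p - 2) = lam / 2 := by
    rw [hs_def, ← Real.rpow_mul (by linarith : (0:ℝ) ≤ lam / 2), inv_mul_cancel₀ hp2',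
      Real.rpow_one]
  set ν : EuclideanSpace ℝ (Fin N) := s • EuclideanSpace.single i0 (1 : ℝ) with hν_def
  have hnorm : ‖ν‖ = s := by
    rw [hν_def, norm_smul, EuclideanSpace.norm_single]
    simp [abs_of_pos hs]
  have hν : ν ≠ 0 := by
    intro h
    rw [h, norm_zero] at hnorm
    exact hs.ne' hnorm.symm
  set t : ℝ := 2 / lam * (|H ν| + 1) with ht_def
  have ht : 0 < t := by positivity
  set Y : Matrix (Fin N) (Fin N) ℝ := Matrix.diagonal (fun i => if i = i1 then t else 0) with hY
  refine ⟨ν, hν, 0, Y, Matrix.isHermitian_zero, Matrix.isHermitian_diagonal _, ?_, ?_⟩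
  · show (Y - 0).PosSemidef
    rw [sub_zero]
    exact Matrix.PosSemidef.diagonal (fun i => by dsimp; split <;> simp [ht.le])
  · have hw : (WithLp.equiv 2 (Fin N → ℝ)) ν i1 = 0 := by
      simp [hν_def, EuclideanSpace.single_apply, hi]
    have hmv : Y.mulVec ((WithLp.equiv 2 (Fin N → ℝ)) ν) ⬝ᵥ (WithLp.equiv 2 (Fin N → ℝ)) ν = 0 := by
      have : Y.mulVec ((WithLp.equiv 2 (Fin N → ℝ)) ν) = 0 := by
        funext i
        rw [hY, Matrix.mulVec_diagonal]
        by_cases h : i = i1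
        · subst h; simp [hw]
        · simp [h]
      rw [this, zero_dotProduct]
    have htr : Y.trace = t := by
      rw [hY, Matrix.trace_diagonal]
      simp
    have hFpX : Fp p ν 0 = 0 := by simp [Fp]
    have hFpY : Fp p ν Y = -(s ^ (p - 2)) * t := by
      rw [Fp, hmv, htr, hnorm]
      ring
    rw [hFpX, hFpY, sub_zero, htr, hsp]
    have habs : -H ν ≤ |H ν| := neg_le_abs _
    have : lam / 2 * t = |H ν| + 1 := by
      rw [ht_def]; field_simp
    nlinarith
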